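/- Every upper quasi-density on ℕ has the strong Darboux property: if μ* is an upper quasi-density, X ⊆ Y ⊆ ℕ, and a is a real number with μ*(X) ≤ a ≤ μ*(Y), then there exists a set A with X ⊆ A ⊆ Y and μ*(A) = a. -/

import Mathlib

/-!
The van der Corput map `v : ℕ → [0, 1)`, which reflects the binary digits of `x` about the
binary point, sends the integers with `v x` in a fixed dyadic interval of length `2⁻ⁿ` into a
single residue class mod `2ⁿ`. By (F4♭) and (F2♭) a subset of a residue class
mod `m` has `μ* ≤ 1/m`, so by subadditivity a set whose `v`-values lie in `[s, u)` has
`μ* ≤ u - s`. Hence `F t = μ*(X ∪ {y ∈ Y | v y < t})` increases at rate at most one, i.e.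
`F t - t` is antitone, and such a function attains every value between `F 0 = μ*(X)` and
`F 1 = μ*(Y)`.
-/

/-- `k·X + h = {k*x + h : x ∈ X}` -/
def affImage (k h : ℕ) (X : Set ℕ) : Set ℕ := (fun x => k * x + h) '' X

open Set Filter Topology

/-- `vanDerCorput (∑ bᵢ 2ⁱ) = ∑ bᵢ 2⁻⁽ⁱ⁺¹⁾`. -/
noncomputable def vanDerCorput : ℕ → ℝ
  | 0 => 0
  | n + 1 => (((n + 1) % 2 : ℕ) + vanDerCorput ((n + 1) / 2)) / 2
decreasing_by exact Nat.div_lt_self n.succ_pos one_lt_two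

lemma vanDerCorput_eq (x : ℕ) : vanDerCorput x = ((x % 2 : ℕ) + vanDerCorput (x / 2)) / 2 := by
  cases x with
  | zero => simp [vanDerCorput]
  | succ n => rw [vanDerCorput]

lemma vanDerCorput_mem_Ico (x : ℕ) : vanDerCorput x ∈ Ico 0 1 := by
  induction x using Nat.strong_induction_on with
  | _ x ih =>
    rcases Nat.eq_zero_or_pos x with rfl | hx
    · simp [vanDerCorput]
    · obtain ⟨h0, h1⟩ := ih (x / 2) (Nat.div_lt_self hx one_lt_two)
      have hbit : ((x % 2 : ℕ) : ℝ) ≤ 1 := by exact_mod_cast Nat.le_of_lt_succ (x.mod_lt two_pos)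
      rw [vanDerCorput_eq]
      constructor <;> [positivity; linarith]

lemma floor_vanDerCorput_mul_two_pow_mem (n x : ℕ) :
    ⌊vanDerCorput x * 2 ^ n⌋ ∈ Ico 0 (2 ^ n) := by
  obtain ⟨h0, h1⟩ := vanDerCorput_mem_Ico x
  constructor
  · exact Int.floor_nonneg.2 (by positivity)
  · rw [Int.floor_lt]
    push_cast
    nlinarith [pow_pos (two_pos : (0 : ℝ) < 2) n]

lemma floor_vanDerCorput_mul_two_pow_succ (n x : ℕ) :
    ⌊vanDerCorput x * 2 ^ (n + 1)⌋ =
      ((x % 2 * 2 ^ n : ℕ) : ℤ) + ⌊vanDerCorput (x / 2) * 2 ^ n⌋ := by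
  rw [vanDerCorput_eq, ← Int.floor_natCast_add]
  congr 1
  push_cast
  ring

/-- The first `n` binary digits of `x` are read off from `⌊v x * 2ⁿ⌋`. -/
lemma modEq_of_floor_vanDerCorput_eq :
    ∀ (n : ℕ) {x y : ℕ}, ⌊vanDerCorput x * 2 ^ n⌋ = ⌊vanDerCorput y * 2 ^ n⌋ → x ≡ y [MOD 2 ^ n]
  | 0, _, _, _ => by simpa using Nat.modEq_one
  | n + 1, x, y, h => by
    rw [floor_vanDerCorput_mul_two_pow_succ, floor_vanDerCorput_mul_two_pow_succ] at h
    obtain ⟨hbit, hhigh⟩ : x % 2 = y % 2 ∧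
        ⌊vanDerCorput (x / 2) * 2 ^ n⌋ = ⌊vanDerCorput (y / 2) * 2 ^ n⌋ := by
      obtain ⟨hx₀, hx₁⟩ := floor_vanDerCorput_mul_two_pow_mem n (x / 2)
      obtain ⟨hy₀, hy₁⟩ := floor_vanDerCorput_mul_two_pow_mem n (y / 2)
      rcases Nat.mod_two_eq_zero_or_one x with h₁ | h₁ <;>
        rcases Nat.mod_two_eq_zero_or_one y with h₂ | h₂ <;>
        simp only [h₁, h₂, zero_mul, one_mul, zero_add, true_and, Nat.cast_zero, Nat.cast_pow,
          Nat.cast_ofNat] at h ⊢ <;>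
        generalize (2 : ℤ) ^ n = P at h hx₁ hy₁ <;> omega
    have := modEq_of_floor_vanDerCorput_eq n hhigh
    unfold Nat.ModEq at this ⊢
    rw [pow_succ', Nat.mod_mul, Nat.mod_mul, hbit, this]

section UpperQuasiDensity

variable {μ : Set ℕ → ℝ} (hle : ∀ X : Set ℕ, μ X ≤ 1)
  (hsub : ∀ X Y : Set ℕ, μ (X ∪ Y) ≤ μ X + μ Y)
  (haff : ∀ (X : Set ℕ) (h k : ℕ), 0 < h → 0 < k → μ (affImage k h X) = (1 / (k : ℝ)) * μ X)

include haff in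
lemma apply_empty_eq_zero : μ ∅ = 0 := by
  have h := haff ∅ 1 2 one_pos two_pos
  simp only [affImage, image_empty] at h
  linarith

include hle haff in
lemma apply_le_inv_of_mod_eq {m r : ℕ} (hm : 0 < m) {W : Set ℕ} (hW : ∀ x ∈ W, x % m = r) :
    μ W ≤ 1 / m := by
  -- shifting by `m` first makes the offset positive, so (F4♭) also covers the class of `0`
  have hshift : affImage 1 m W = affImage m (m + r) ((· / m) '' W) := by
    simp only [affImage, image_image]
    refine image_congr fun x hx => ?_
    have := Nat.div_add_mod x m
    rw [hW x hx] at this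
    omega
  have h₁ := haff W m 1 hm one_pos
  have h₂ := haff ((· / m) '' W) (m + r) m (by omega) hm
  rw [hshift, h₂, Nat.cast_one, div_one, one_mul] at h₁
  rw [← h₁]
  exact mul_le_of_le_one_right (by positivity) (hle _)

include hle haff in
lemma apply_le_of_floor_vanDerCorput_eq (n : ℕ) (j : ℤ) {W : Set ℕ}
    (hW : ∀ x ∈ W, ⌊vanDerCorput x * 2 ^ n⌋ = j) :
    μ W ≤ 1 / 2 ^ n := by
  rcases W.eq_empty_or_nonempty with rfl | ⟨x₀, hx₀⟩
  · rw [apply_empty_eq_zero haff]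
    positivity
  · have h := apply_le_inv_of_mod_eq hle haff (pow_pos two_pos n) (r := x₀ % 2 ^ n) fun x hx =>
      modEq_of_floor_vanDerCorput_eq n ((hW x hx).trans (hW x₀ hx₀).symm)
    exact_mod_cast h

include hle hsub haff in
lemma apply_le_card_div_of_floor_vanDerCorput_mem (n : ℕ) (s : Finset ℤ) {W : Set ℕ}
    (hW : ∀ x ∈ W, ⌊vanDerCorput x * 2 ^ n⌋ ∈ s) :
    μ W ≤ s.card / 2 ^ n := by
  induction s using Finset.induction_on generalizing W with
  | empty =>
    rw [show W = ∅ from eq_empty_of_forall_notMem fun x hx => by simpa using hW x hx,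
      apply_empty_eq_zero haff]
    simp
  | insert i s hi ih =>
    let S := {x | ⌊vanDerCorput x * 2 ^ n⌋ = i}
    calc μ W = μ (W ∩ S ∪ W \ S) := by rw [inter_union_sdiff]
      _ ≤ μ (W ∩ S) + μ (W \ S) := hsub _ _
      _ ≤ 1 / 2 ^ n + s.card / 2 ^ n := by
        gcongr
        · exact apply_le_of_floor_vanDerCorput_eq hle haff n i fun x hx => hx.2
        · exact ih fun x hx => (Finset.mem_insert.1 (hW x hx.1)).resolve_left hx.2
      _ = (insert i s).card / 2 ^ n := by
        rw [Finset.card_insert_of_notMem hi]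
        push_cast
        ring

include hle hsub haff in
lemma apply_le_sub_of_vanDerCorput_mem_Ico {s u : ℝ} (hsu : s ≤ u) {W : Set ℕ}
    (hW : ∀ x ∈ W, vanDerCorput x ∈ Ico s u) :
    μ W ≤ u - s := by
  have hn : ∀ n : ℕ, μ W ≤ u - s + 2 * (1 / 2) ^ n := by
    intro n
    have hp : (0 : ℝ) < 2 ^ n := by positivity
    have hfloor : ⌊s * 2 ^ n⌋ ≤ ⌊u * 2 ^ n⌋ := Int.floor_le_floor (by gcongr)
    have hcard : ((Finset.Icc ⌊s * 2 ^ n⌋ ⌊u * 2 ^ n⌋).card : ℝ) ≤ (u - s) * 2 ^ n + 2 := by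
      have h := Int.card_Icc_of_le _ _ (hfloor.trans (Int.le_add_one le_rfl))
      have h' : ((Finset.Icc ⌊s * 2 ^ n⌋ ⌊u * 2 ^ n⌋).card : ℝ) =
          ⌊u * 2 ^ n⌋ + 1 - ⌊s * 2 ^ n⌋ := by exact_mod_cast h
      rw [h']
      linarith [Int.floor_le (u * 2 ^ n), Int.sub_one_lt_floor (s * 2 ^ n)]
    calc μ W ≤ (Finset.Icc ⌊s * 2 ^ n⌋ ⌊u * 2 ^ n⌋).card / 2 ^ n := by
          refine apply_le_card_div_of_floor_vanDerCorput_mem hle hsub haff n _ fun x hx => ?_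
          obtain ⟨hsx, hxu⟩ := hW x hx
          exact Finset.mem_Icc.2 ⟨Int.floor_le_floor (by gcongr), Int.floor_le_floor (by gcongr)⟩
      _ ≤ ((u - s) * 2 ^ n + 2) / 2 ^ n := by gcongr
      _ = u - s + 2 * (1 / 2) ^ n := by
        rw [one_div_pow]
        field_simp
  have hlim : Tendsto (fun n : ℕ => u - s + 2 * (1 / 2 : ℝ) ^ n) atTop (𝓝 (u - s)) := by
    simpa using tendsto_const_nhds.add
      ((tendsto_pow_atTop_nhds_zero_of_lt_one (r := (1 / 2 : ℝ)) (by norm_num)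
        (by norm_num)).const_mul 2)
  exact ge_of_tendsto' hlim hn

include hle hsub haff in
lemma antitone_apply_union_inter_vanDerCorput_lt_sub (X Y : Set ℕ) :
    Antitone fun t => μ (X ∪ (Y ∩ {x | vanDerCorput x < t})) - t := by
  intro s u hsu
  let C := X ∪ (Y ∩ {x | vanDerCorput x < s})
  let D := X ∪ (Y ∩ {x | vanDerCorput x < u})
  have hCD : C ⊆ D := union_subset_union_right X fun x hx => ⟨hx.1, hx.2.trans_le hsu⟩
  have hband : μ (D \ C) ≤ u - s := by
    refine apply_le_sub_of_vanDerCorput_mem_Ico hle hsub haff hsu fun x ⟨hxD, hxC⟩ => ?_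
    simp only [C, D, mem_union, mem_inter_iff, mem_ofPred_eq, not_or, not_and, not_lt] at hxD hxC
    obtain hX | ⟨hY, hxu⟩ := hxD
    · exact absurd hX hxC.1
    · exact ⟨hxC.2 hY, hxu⟩
  have h := hsub C (D \ C)
  rw [union_sdiff_cancel hCD] at h
  show μ D - u ≤ μ C - s
  linarith

end UpperQuasiDensity

theorem exists_mem_Icc_eq_of_antitone_sub {F : ℝ → ℝ} (hF : Antitone fun t => F t - t)
    {p q a : ℝ} (hpq : p ≤ q) (hp : F p ≤ a) (hq : a ≤ F q) : ∃ t ∈ Icc p q, F t = a := by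
  let G := {r ∈ Icc p q | F r ≤ a}
  have hpG : p ∈ G := ⟨⟨le_rfl, hpq⟩, hp⟩
  have hG : BddAbove G := ⟨q, fun r hr => hr.1.2⟩
  set t := sSup G
  have ht : t ∈ Icc p q := ⟨le_csSup hG hpG, csSup_le ⟨p, hpG⟩ fun r hr => hr.1.2⟩
  have hslope : ∀ {s u}, s ≤ u → F u ≤ F s + (u - s) := fun hsu => by linarith [hF hsu]
  refine ⟨t, ht, le_antisymm ?_ ?_⟩
  · by_contra! hta
    obtain ⟨s, hsG, hts⟩ := exists_lt_of_lt_csSup ⟨p, hpG⟩ (sub_lt_self t (sub_pos.2 hta))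
    linarith [hslope (le_csSup hG hsG), hsG.2]
  · by_contra! hta
    have htq : t < q := ht.2.lt_of_ne fun htq => by linarith [htq ▸ hq]
    obtain ⟨δ, hδ, hδa, hδq⟩ : ∃ δ, 0 < δ ∧ δ < a - F t ∧ δ < q - t := by
      obtain ⟨δ, hδ, hδmin⟩ := exists_between (lt_min (sub_pos.2 hta) (sub_pos.2 htq))
      exact ⟨δ, hδ, lt_min_iff.1 hδmin⟩
    have hδG : t + δ ∈ G := ⟨⟨by linarith [ht.1], by linarith⟩,
      by linarith [hslope (s := t) (le_add_of_nonneg_right hδ.le)]⟩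
    linarith [le_csSup hG hδG]

theorem stmt13_general (μ : Set ℕ → ℝ)
    (h2 : ∀ X : Set ℕ, μ X ≤ 1)
    (h3 : ∀ X Y : Set ℕ, μ (X ∪ Y) ≤ μ X + μ Y)
    (h4 : ∀ (X : Set ℕ) (h k : ℕ), 0 < h → 0 < k →
      μ (affImage k h X) = (1 / (k : ℝ)) * μ X) :
    ∀ X Y : Set ℕ, X ⊆ Y → ∀ a : ℝ, μ X ≤ a → a ≤ μ Y →
      ∃ A : Set ℕ, X ⊆ A ∧ A ⊆ Y ∧ μ A = a := by
  intro X Y hXY a hXa haY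
  have hF0 : μ (X ∪ (Y ∩ {x | vanDerCorput x < 0})) = μ X := by
    simp [not_lt.2 (vanDerCorput_mem_Ico _).1]
  have hF1 : μ (X ∪ (Y ∩ {x | vanDerCorput x < 1})) = μ Y := by
    simp [(vanDerCorput_mem_Ico _).2, union_eq_self_of_subset_left hXY]
  obtain ⟨t, -, ht⟩ := exists_mem_Icc_eq_of_antitone_sub
    (antitone_apply_union_inter_vanDerCorput_lt_sub h2 h3 h4 X Y) zero_le_one
    (hF0.trans_le hXa) (haY.trans_eq hF1.symm)
  exact ⟨_, subset_union_left, union_subset hXY inter_subset_left, ht⟩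

theorem stmt13 (μ : Set ℕ → ℝ)
    (h1 : μ Set.univ = 1)
    (h2 : ∀ X : Set ℕ, μ X ≤ 1)
    (h3 : ∀ X Y : Set ℕ, μ (X ∪ Y) ≤ μ X + μ Y)
    (h4 : ∀ (X : Set ℕ) (h k : ℕ), 0 < h → 0 < k →
      μ (affImage k h X) = (1 / (k : ℝ)) * μ X) :
    ∀ X Y : Set ℕ, X ⊆ Y → ∀ a : ℝ, μ X ≤ a → a ≤ μ Y →
      ∃ A : Set ℕ, X ⊆ A ∧ A ⊆ Y ∧ μ A = a :=
  stmt13_general μ h2 h3 h4
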